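/- arXiv:2309.10194 — 2 statements merged into one kernel-verified Lean document; each statement's English description precedes it below -/
import Mathlib

section
/- Let N ≥ 2 and let X_1, …, X_N be real samples with X_(1) < X_(N). For every fixed x ∈ ℝ, the Gaussian KDE density normalized by its mass on [X_(1), X_(N)] converges pointwise to the uniform density as the bandwidth grows: lim_{h→∞} f̂_h(x)/P_h(X_(1), X_(N)) = 1/(X_(N) − X_(1)). -/
open MeasureTheory Filter

/-- The Gaussian kernel `K(z) = exp(-z²/2)/√(2π)`. -/
noncomputable def gaussKernel (z : ℝ) : ℝ := Real.exp (-z ^ 2 / 2) / Real.sqrt (2 * Real.pi)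

/-- The Gaussian kernel density estimator with bandwidth `h` for samples `X`. -/
noncomputable def kde (N : ℕ) (X : Fin N → ℝ) (h x : ℝ) : ℝ :=
  (1 / (N * h)) * ∑ n, gaussKernel ((x - X n) / h)

/-- `P_h(a,b) = ∫_a^b f̂_h(t) dt`. -/
noncomputable def kdeMass (N : ℕ) (X : Fin N → ℝ) (h a b : ℝ) : ℝ :=
  ∫ t in a..b, kde N X h t

/-- The kernel density integral transform, where `a` is the sample minimum and `b`
the sample maximum. -/
noncomputable def kdi (N : ℕ) (X : Fin N → ℝ) (a b h x : ℝ) : ℝ :=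
  if x < a then 0
  else if x < b then kdeMass N X h a x / kdeMass N X h a b
  else 1

/-- Min-max scaling, where `a` is the sample minimum and `b` the sample maximum. -/
noncomputable def minmax (a b x : ℝ) : ℝ :=
  if x ≤ a then 0
  else if x ≤ b then (x - a) / (b - a)
  else 1

/-!
As `h → ∞` every summand `K((x - X n)/h)` of `N h f̂_h(x)` tends to `K(0)`, and by dominated
convergence (the Gaussian is bounded by `K(0)`) every `∫_a^b K((t - X n)/h) dt` tends to
`(b - a) K(0)`. The common factor `1/(N h)` cancels in the quotient, which therefore tends to
`N K(0) / (N (b - a) K(0)) = 1/(b - a)`.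
-/

open Topology

lemma continuous_gaussKernel : Continuous gaussKernel := by
  unfold gaussKernel
  fun_prop

lemma gaussKernel_pos (z : ℝ) : 0 < gaussKernel z :=
  div_pos (Real.exp_pos _) (Real.sqrt_pos.2 (by positivity))

lemma norm_gaussKernel_le (z : ℝ) : ‖gaussKernel z‖ ≤ gaussKernel 0 := by
  rw [Real.norm_of_nonneg (gaussKernel_pos z).le, gaussKernel, gaussKernel]
  gcongr Real.exp ?_ / _
  nlinarith [sq_nonneg z]

lemma tendsto_comp_div_atTop {K : ℝ → ℝ} (hK : Continuous K) (y : ℝ) :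
    Tendsto (fun h : ℝ => K (y / h)) atTop (𝓝 (K 0)) :=
  hK.continuousAt.tendsto.comp (tendsto_const_nhds.div_atTop tendsto_id)

lemma tendsto_intervalIntegral_comp_div_atTop {K : ℝ → ℝ} (hK : Continuous K) {C : ℝ}
    (hC : ∀ z, ‖K z‖ ≤ C) (a b c : ℝ) :
    Tendsto (fun h : ℝ => ∫ t in a..b, K ((t - c) / h)) atTop (𝓝 ((b - a) * K 0)) := by
  have hconst : (b - a) * K 0 = ∫ _ in a..b, K 0 := by
    simp [intervalIntegral.integral_const, smul_eq_mul]
  rw [hconst]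
  refine intervalIntegral.tendsto_integral_filter_of_dominated_convergence (fun _ => C)
    (Eventually.of_forall fun h => (hK.comp (by fun_prop)).aestronglyMeasurable)
    (Eventually.of_forall fun h => Eventually.of_forall fun t _ => hC _)
    intervalIntegrable_const (Eventually.of_forall fun t _ => ?_)
  exact tendsto_comp_div_atTop hK (t - c)

lemma kdeMass_eq_mul_sum (N : ℕ) (X : Fin N → ℝ) (h a b : ℝ) :
    kdeMass N X h a b = 1 / (N * h) * ∑ n, ∫ t in a..b, gaussKernel ((t - X n) / h) := by
  unfold kdeMass kde
  rw [intervalIntegral.integral_const_mul, intervalIntegral.integral_finsetSum]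
  exact fun n _ => (continuous_gaussKernel.comp (by fun_prop)).intervalIntegrable a b

lemma kde_div_kdeMass_eq {N : ℕ} (hN : N ≠ 0) (X : Fin N → ℝ) {h : ℝ} (hh : h ≠ 0)
    (a b x : ℝ) :
    kde N X h x / kdeMass N X h a b =
      (∑ n, gaussKernel ((x - X n) / h)) / ∑ n, ∫ t in a..b, gaussKernel ((t - X n) / h) := by
  rw [kdeMass_eq_mul_sum, kde, mul_div_mul_left _ _ (by positivity)]

theorem kde_normalized_tendsto_uniform_general (N : ℕ) (hN : 2 ≤ N) (X : Fin N → ℝ) (a b : ℝ)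
    (hab : a < b) (x : ℝ) :
    Tendsto (fun h => kde N X h x / kdeMass N X h a b) atTop (nhds (1 / (b - a))) := by
  have hK0 : 0 < gaussKernel 0 := gaussKernel_pos 0
  have hNpos : (0 : ℝ) < N := by exact_mod_cast (by omega : 0 < N)
  have hnum : Tendsto (fun h => ∑ n : Fin N, gaussKernel ((x - X n) / h)) atTop
      (𝓝 (N * gaussKernel 0)) := by
    simpa using tendsto_finsetSum Finset.univ fun n _ =>
      tendsto_comp_div_atTop continuous_gaussKernel (x - X n)
  have hden : Tendsto (fun h => ∑ n : Fin N, ∫ t in a..b, gaussKernel ((t - X n) / h)) atTop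
      (𝓝 (N * ((b - a) * gaussKernel 0))) := by
    simpa using tendsto_finsetSum Finset.univ fun n _ =>
      tendsto_intervalIntegral_comp_div_atTop continuous_gaussKernel norm_gaussKernel_le a b (X n)
  have hlim : N * gaussKernel 0 / (N * ((b - a) * gaussKernel 0)) = 1 / (b - a) := by
    field_simp
  rw [← hlim]
  refine (hnum.div hden (by positivity)).congr' ?_
  filter_upwards [eventually_gt_atTop 0] with h hh
  exact (kde_div_kdeMass_eq (by omega) X hh.ne' a b x).symm

/-- As the bandwidth `h → ∞`, the Gaussian KDE density normalized by its mass on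
`[X_(1), X_(N)]` converges pointwise to the uniform density `1/(X_(N) - X_(1))`. -/
theorem kde_normalized_tendsto_uniform (N : ℕ) (hN : 2 ≤ N) (X : Fin N → ℝ) (a b : ℝ)
    (ha : ∃ n, X n = a) (hb : ∃ n, X n = b) (hbd : ∀ n, a ≤ X n ∧ X n ≤ b)
    (hab : a < b) (x : ℝ) :
    Tendsto (fun h => kde N X h x / kdeMass N X h a b) atTop (nhds (1 / (b - a))) :=
  kde_normalized_tendsto_uniform_general N hN X a b hab x
end

section
/- Let X_1, …, X_N be real samples. For every x ∈ ℝ, lim_{h→0⁺} ∫_{−∞}^x f̂_h(t) dt = (#{n : X_n < x} + (1/2)·#{n : X_n = x}) / N; in particular, at a sample point the limiting value of the Gaussian KDE c.d.f. counts that point with weight one half. -/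
open MeasureTheory Filter

/-!
Integrating term by term, each sample contributes `Φ((x - X n) / h) / N`, where `Φ` is the
standard normal c.d.f. As `h → 0⁺` the argument tends to `+∞`, to `-∞`, or stays `0` according as
`X n < x`, `X n > x` or `X n = x`, and `Φ 0 = 1 / 2` because the Gaussian is symmetric.
-/

open Set Topology ProbabilityTheory

theorem setIntegral_Iic_comp_sub_div {E : Type*} [NormedAddCommGroup E] [NormedSpace ℝ E]
    (g : ℝ → E) (c x : ℝ) {h : ℝ} (hh : 0 < h) :
    ∫ t in Iic x, g ((t - c) / h) = h • ∫ u in Iic ((x - c) / h), g u := by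
  have hind : (Iic x).indicator (fun t => g ((t - c) / h))
      = fun t => (Iic ((x - c) / h)).indicator g ((t - c) / h) := by
    ext t
    simp only [indicator, mem_Iic, div_le_div_iff_of_pos_right hh, sub_le_sub_iff_right]
  rw [← integral_indicator measurableSet_Iic, ← integral_indicator measurableSet_Iic, hind,
    integral_sub_right_eq_self (fun t => (Iic ((x - c) / h)).indicator g (t / h)),
    Measure.integral_comp_div, abs_of_pos hh]

theorem tendsto_comp_sub_div_nhdsGT_zero {α : Type*} [TopologicalSpace α] {F : ℝ → α} {a b : α}
    (hbot : Tendsto F atBot (𝓝 a)) (htop : Tendsto F atTop (𝓝 b)) (c x : ℝ) :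
    Tendsto (fun h => F ((x - c) / h)) (𝓝[>] 0)
      (𝓝 (if c < x then b else if c = x then F 0 else a)) := by
  rcases lt_trichotomy c x with hlt | rfl | hgt
  · rw [if_pos hlt]
    exact htop.comp (tendsto_inv_nhdsGT_zero.const_mul_atTop (sub_pos.2 hlt))
  · simp only [lt_irrefl, if_false, if_true, sub_self, zero_div]
    exact tendsto_const_nhds
  · rw [if_neg hgt.not_gt, if_neg hgt.ne']
    exact hbot.comp ((tendsto_const_mul_atBot_of_neg (sub_neg.2 hgt)).2 tendsto_inv_nhdsGT_zero)

theorem Finset.sum_ite_lt_ite_eq {ι α R : Type*} [LinearOrder α] [Semiring R] (s : Finset ι)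
    (f : ι → α) (x : α) (a : R) :
    ∑ i ∈ s, (if f i < x then 1 else if f i = x then a else 0)
      = (s.filter fun i => f i < x).card + a * (s.filter fun i => f i = x).card := by
  have hsplit (i : ι) : (if f i < x then 1 else if f i = x then a else 0)
      = (if f i < x then 1 else 0) + a * (if f i = x then 1 else 0) := by
    rcases lt_trichotomy (f i) x with hlt | heq | hgt
    · simp [hlt, hlt.ne]
    · simp [heq]
    · simp [hgt.not_gt, hgt.ne']
  simp only [hsplit, Finset.sum_add_distrib, ← Finset.mul_sum, Finset.sum_boole]

theorem cdf_gaussianReal_self (μ : ℝ) {v : NNReal} (hv : v ≠ 0) :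
    cdf (gaussianReal μ v) μ = 1 / 2 := by
  have hsymm : (gaussianReal μ v).real (Iic μ) = (gaussianReal μ v).real (Ioi μ) := by
    have := nullSingletonClass_gaussianReal (μ := μ) hv
    have hmap := gaussianReal_map_const_sub (μ := μ) (v := v) (2 * μ)
    rw [show 2 * μ - μ = μ by ring] at hmap
    calc (gaussianReal μ v).real (Iic μ)
        = (gaussianReal μ v).real ((2 * μ - ·) ⁻¹' Iic μ) := by
          rw [← map_measureReal_apply (by fun_prop) measurableSet_Iic, hmap]
      _ = (gaussianReal μ v).real (Ici μ) := by
          congr 1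
          ext y
          simp only [mem_preimage, mem_Iic, mem_Ici]
          constructor <;> intro <;> linarith
      _ = (gaussianReal μ v).real (Ioi μ) := measureReal_congr Ioi_ae_eq_Ici.symm
  have hsplit :=
    measureReal_union (μ := gaussianReal μ v) (Iic_disjoint_Ioi le_rfl) measurableSet_Ioi
  rw [Iic_union_Ioi, probReal_univ] at hsplit
  rw [cdf_eq_real]
  linarith

theorem gaussKernel_eq_gaussianPDFReal : gaussKernel = gaussianPDFReal 0 1 := by
  ext z
  simp [gaussKernel, gaussianPDFReal, div_eq_inv_mul, mul_comm]

theorem integrable_gaussKernel : Integrable gaussKernel :=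
  gaussKernel_eq_gaussianPDFReal ▸ integrable_gaussianPDFReal 0 1

theorem setIntegral_Iic_gaussKernel (y : ℝ) :
    ∫ t in Iic y, gaussKernel t = cdf (gaussianReal 0 1) y := by
  rw [cdf_eq_real, measureReal_def, gaussianReal_apply_eq_integral 0 one_ne_zero,
    ENNReal.toReal_ofReal
      (setIntegral_nonneg measurableSet_Iic fun t _ => gaussianPDFReal_nonneg 0 1 t),
    gaussKernel_eq_gaussianPDFReal]

theorem setIntegral_Iic_kde (N : ℕ) (X : Fin N → ℝ) {h : ℝ} (hh : 0 < h) (x : ℝ) :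
    ∫ t in Iic x, kde N X h t = 1 / N * ∑ n, cdf (gaussianReal 0 1) ((x - X n) / h) := by
  have hint (n : Fin N) : Integrable fun t => gaussKernel ((t - X n) / h) :=
    (integrable_gaussKernel.comp_div hh.ne').comp_sub_right (X n)
  simp only [kde]
  rw [integral_const_mul, integral_finsetSum _ fun n _ => (hint n).integrableOn]
  simp only [setIntegral_Iic_comp_sub_div _ _ _ hh, setIntegral_Iic_gaussKernel, smul_eq_mul,
    ← Finset.mul_sum]
  field_simp

theorem kde_cdf_tendsto_half_weight_general (N : ℕ) (X : Fin N → ℝ) (x : ℝ) :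
    Tendsto (fun h => ∫ t in Set.Iic x, kde N X h t)
      (nhdsWithin 0 (Set.Ioi 0))
      (nhds ((((Finset.univ.filter fun n => X n < x).card : ℝ) +
        (1 / 2) * ((Finset.univ.filter fun n => X n = x).card : ℝ)) / N)) := by
  have hlim (n : Fin N) : Tendsto (fun h => cdf (gaussianReal 0 1) ((x - X n) / h)) (𝓝[>] 0)
      (𝓝 (if X n < x then 1 else if X n = x then 1 / 2 else 0)) := by
    simpa only [cdf_gaussianReal_self 0 one_ne_zero] using
      tendsto_comp_sub_div_nhdsGT_zero (tendsto_cdf_atBot (gaussianReal 0 1))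
        (tendsto_cdf_atTop _) (X n) x
  rw [← Finset.sum_ite_lt_ite_eq, div_eq_inv_mul, ← one_div]
  refine ((tendsto_finsetSum _ fun n _ => hlim n).const_mul _).congr' ?_
  filter_upwards [self_mem_nhdsWithin] with h hh using (setIntegral_Iic_kde N X hh x).symm

/-- For every `x`, the Gaussian KDE c.d.f. converges, as the bandwidth `h → 0⁺`, to
`(#{n : X_n < x} + (1/2)·#{n : X_n = x}) / N`: sample points equal to `x` are counted
with weight one half. -/
theorem kde_cdf_tendsto_half_weight (N : ℕ) (hN : 1 ≤ N) (X : Fin N → ℝ) (x : ℝ) :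
    Tendsto (fun h => ∫ t in Set.Iic x, kde N X h t)
      (nhdsWithin 0 (Set.Ioi 0))
      (nhds ((((Finset.univ.filter fun n => X n < x).card : ℝ) +
        (1 / 2) * ((Finset.univ.filter fun n => X n = x).card : ℝ)) / N)) :=
  kde_cdf_tendsto_half_weight_general N X x
end
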